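/- For every integer m ≥ 1, the identity a(m) = b(m+1) − b(m) holds, where a(m) = Σ_{k=0}^{⌊(m+1)/2⌋} C(m−1, k)·C(m−k+1, k) and b(m) = Σ_{k=0}^{⌊m/2⌋} C(m−1, k)·C(m−k, k). -/

import Mathlib

/-!
Both sequences are read off the trinomial coefficients `T n t`, the coefficients of
`(x⁻¹ + 1 + x) ^ n`. Pascal's rule in the upper index gives `b (n + 1) = T n 0 + T n (-1)` and
`a (n + 1) = T n 0 + 2 T n (-1) + T n (-2)`, while
`T (n + 1) t = T n (t - 1) + T n t + T n (t + 1)`. Expanding `b (n + 2)` by this recurrence and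
using the symmetry `T n 1 = T n (-1)` gives `b (n + 2) = a (n + 1) + b (n + 1)`.
-/

/-- `a(m) = Σ_{k=0}^{⌊(m+1)/2⌋} C(m−1, k)·C(m−k+1, k)` (OEIS A025566). -/
def aSeq (m : ℕ) : ℕ :=
  ∑ k ∈ Finset.range ((m + 1) / 2 + 1), Nat.choose (m - 1) k * Nat.choose (m - k + 1) k

/-- `b(m) = Σ_{k=0}^{⌊m/2⌋} C(m−1, k)·C(m−k, k)` (OEIS A005773). -/
def bSeq (m : ℕ) : ℕ :=
  ∑ k ∈ Finset.range (m / 2 + 1), Nat.choose (m - 1) k * Nat.choose (m - k) k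

open Finset

def intChoose (n : ℕ) : ℤ → ℕ
  | (k : ℕ) => n.choose k
  | .negSucc _ => 0

lemma intChoose_natCast (n k : ℕ) : intChoose n k = n.choose k := rfl

lemma intChoose_of_neg (n : ℕ) {k : ℤ} (hk : k < 0) : intChoose n k = 0 := by
  obtain ⟨k, rfl⟩ := Int.exists_eq_neg_ofNat hk.le
  rcases k with _ | k
  · simp at hk
  · rfl

lemma intChoose_zero_left (k : ℤ) : intChoose 0 k = if k = 0 then 1 else 0 := by
  rcases lt_or_ge k 0 with hk | hk
  · simp [intChoose_of_neg 0 hk, hk.ne]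
  · lift k to ℕ using hk
    rcases k with _ | k <;> rfl

lemma intChoose_succ (n : ℕ) (k : ℤ) :
    intChoose (n + 1) k = intChoose n k + intChoose n (k - 1) := by
  rcases lt_or_ge k 0 with hk | hk
  · simp [intChoose_of_neg _ hk, intChoose_of_neg _ (show k - 1 < 0 by omega)]
  · lift k to ℕ using hk
    rcases k with _ | k
    · rw [intChoose_of_neg n (k := ((0 : ℕ) : ℤ) - 1) (by simp)]
      simp only [intChoose_natCast, Nat.choose_zero_right]
    · rw [Nat.cast_succ, add_sub_cancel_right, ← Nat.cast_succ]
      simp only [intChoose_natCast, Nat.choose_succ_succ', add_comm]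

/-- The trinomial coefficient, the coefficient of `x ^ t` in `(x⁻¹ + 1 + x) ^ n`:
the `j`-th term chooses `j` factors `x⁻¹` and then `j + t` factors `x`. -/
def trinomial (n : ℕ) (t : ℤ) : ℕ :=
  ∑ j ∈ range (n + 1), n.choose j * intChoose (n - j) (j + t)

lemma sum_choose_mul_intChoose_succ_sub (n : ℕ) (t : ℤ) :
    ∑ j ∈ range (n + 1), n.choose j * intChoose (n + 1 - j) (j + t)
      = trinomial n t + trinomial n (t - 1) := by
  rw [trinomial, trinomial, ← sum_add_distrib]
  refine sum_congr rfl fun j hj ↦ ?_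
  rw [Nat.sub_add_comm (mem_range_succ_iff.mp hj), intChoose_succ, mul_add, add_sub_assoc]

lemma trinomial_succ (n : ℕ) (t : ℤ) :
    trinomial (n + 1) t = trinomial n (t - 1) + trinomial n t + trinomial n (t + 1) := by
  have expand := sum_choose_succ_mul (fun j r ↦ intChoose r (j + t)) n
  simp only [Nat.cast_id] at expand
  have shifted : ∑ j ∈ range (n + 1), n.choose j * intChoose (n - j) (↑(j + 1) + t)
      = trinomial n (t + 1) := by
    refine sum_congr rfl fun j _ ↦ ?_
    rw [Nat.cast_succ, add_assoc, add_comm 1 t]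
  rw [trinomial, expand, sum_choose_mul_intChoose_succ_sub, shifted]
  ring

lemma trinomial_neg (n : ℕ) (t : ℤ) : trinomial n (-t) = trinomial n t := by
  induction n generalizing t with
  | zero => simp [trinomial, intChoose_zero_left]
  | succ n ih =>
    rw [trinomial_succ, trinomial_succ, ih, ← ih (t - 1), ← ih (t + 1)]
    ring_nf

lemma sum_range_choose_mul_eq_of_eq_zero {n m : ℕ} {g : ℕ → ℕ}
    (hg : ∀ k, m ≤ k → k ≤ n → g k = 0) :
    ∑ k ∈ range m, n.choose k * g k = ∑ k ∈ range (n + 1), n.choose k * g k := by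
  rcases le_total m (n + 1) with h | h
  · refine sum_subset (range_subset_range.mpr h) fun k hk hkm ↦ ?_
    simp only [mem_range, not_lt] at hk hkm
    rw [hg k hkm (by omega), mul_zero]
  · refine (sum_subset (range_subset_range.mpr h) fun k _ hkn ↦ ?_).symm
    simp only [mem_range, not_lt] at hkn
    rw [Nat.choose_eq_zero_of_lt hkn, zero_mul]

lemma bSeq_succ (n : ℕ) : bSeq (n + 1) = trinomial n 0 + trinomial n (-1) := by
  rw [bSeq, Nat.add_sub_cancel, sum_range_choose_mul_eq_of_eq_zero, ← zero_sub,
    ← sum_choose_mul_intChoose_succ_sub]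
  · simp [intChoose_natCast]
  · intro k hk _
    exact Nat.choose_eq_zero_of_lt (by omega)

lemma aSeq_succ (n : ℕ) :
    aSeq (n + 1) = trinomial n 0 + 2 * trinomial n (-1) + trinomial n (-2) := by
  rw [aSeq, Nat.add_sub_cancel, sum_range_choose_mul_eq_of_eq_zero]
  · have pascal : ∀ k ∈ range (n + 1), n.choose k * (n + 1 - k + 1).choose k
        = n.choose k * intChoose (n + 1 - k) (k + 0)
          + n.choose k * intChoose (n + 1 - k) (k + -1) := fun k _ ↦ by
      rw [← intChoose_natCast (n + 1 - k + 1), intChoose_succ, add_zero, ← sub_eq_add_neg,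
        mul_add]
    rw [sum_congr rfl pascal, sum_add_distrib, sum_choose_mul_intChoose_succ_sub,
      sum_choose_mul_intChoose_succ_sub]
    norm_num
    ring
  · intro k hk _
    exact Nat.choose_eq_zero_of_lt (by omega)

lemma aSeq_add_bSeq (n : ℕ) : aSeq (n + 1) + bSeq (n + 1) = bSeq (n + 2) := by
  rw [aSeq_succ, bSeq_succ, bSeq_succ, trinomial_succ, trinomial_succ]
  norm_num [← trinomial_neg n 1]
  ring

/-- For every `m ≥ 1`, `a(m) = b(m+1) − b(m)`. -/
theorem aSeq_eq_bSeq_sub (m : ℕ) (hm : 1 ≤ m) :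
    (aSeq m : ℤ) = (bSeq (m + 1) : ℤ) - (bSeq m : ℤ) := by
  obtain ⟨n, rfl⟩ : ∃ n, m = n + 1 := ⟨m - 1, by omega⟩
  rw [← aSeq_add_bSeq]
  push_cast
  ring
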